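/- If an ALCQP(p,s) concept C is satisfiable, then the ALCQI concept C_dom ⊓ 𝕋(C) is satisfiable, where 𝕋 is the reification translation. -/

import Mathlib

/-! ALCQP(p,s) and its reification translation 𝕋 into ALCQI. -/

/-- The two permutation operators: cyclic shift `p` and swap `s`. -/
inductive PS : Type
  | p : PS
  | s : PS

/-- The permutation of `Fin (n+2)` associated with an operator: for `p`, tuples of `p(R)`
are `t ∘ ρ` where `ρ 0 = n+1` (last coordinate moved to the front); for `s`, the
transposition of the last two coordinates. -/
def permOfOp (n : ℕ) : PS → Equiv.Perm (Fin (n + 2))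
  | .p => (finRotate (n + 2)).symm
  | .s => Equiv.swap (Fin.castSucc (Fin.last n)) (Fin.last (n + 1))

/-- Action of one operator on an `(n+2)`-ary relation. -/
def applyOp {A : Type*} (n : ℕ) (o : PS) (R : Set (Fin (n + 2) → A)) :
    Set (Fin (n + 2) → A) :=
  (fun t => t ∘ ⇑(permOfOp n o)) '' R

/-- Action of a permutation string (word over `{p,s}`) on an `(n+2)`-ary relation. -/
def applyString {A : Type*} (n : ℕ) : List PS → Set (Fin (n + 2) → A) → Set (Fin (n + 2) → A)
  | [], R => R
  | o :: rest, R => applyString n rest (applyOp n o R)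

/-- The permutation associated with a permutation string `π`: `permOfString n π i` is the
source coordinate of `R` sent to position `i` of `R^π`. -/
def permOfString (n : ℕ) : List PS → Equiv.Perm (Fin (n + 2))
  | [] => 1
  | o :: rest => (permOfString n rest).trans (permOfOp n o)

/-- ALCQP(p,s) concepts: a role `R` has arity `ar R + 2` and may be modified by a
permutation string `π`; `atLeast k R π cs` is `≥k R^π.(C₂,…,Cₙ)` with `n = ar R + 2`. -/
inductive ALCQP (Cn Rn : Type) (ar : Rn → ℕ) : Type
  | top : ALCQP Cn Rn ar
  | bot : ALCQP Cn Rn ar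
  | atom (A : Cn) : ALCQP Cn Rn ar
  | neg (C : ALCQP Cn Rn ar) : ALCQP Cn Rn ar
  | inter (C D : ALCQP Cn Rn ar) : ALCQP Cn Rn ar
  | atLeast (k : ℕ) (R : Rn) (π : List PS) (cs : Fin (ar R + 1) → ALCQP Cn Rn ar) :
      ALCQP Cn Rn ar

/-- An interpretation with polyadic roles of arity `ar R + 2`. -/
structure PInterp (Cn Rn : Type) (ar : Rn → ℕ) : Type 1 where
  Dom : Type
  cInt : Cn → Set Dom
  rInt : (R : Rn) → Set (Fin (ar R + 2) → Dom)

/-- Semantics of ALCQP(p,s): `u ∈ (≥k R^π.(C₂,…,Cₙ))^I` iff there are at least `k`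
tuples `(u, v₂, …, vₙ) ∈ (R^π)^I` with `vᵢ ∈ Cᵢ^I` for each `i`. -/
def qpsem {Cn Rn : Type} {ar : Rn → ℕ} (I : PInterp Cn Rn ar) :
    ALCQP Cn Rn ar → Set I.Dom
  | .top => Set.univ
  | .bot => ∅
  | .atom A => I.cInt A
  | .neg C => (qpsem I C)ᶜ
  | .inter C D => qpsem I C ∩ qpsem I D
  | .atLeast k R π cs =>
      { u | ∃ f : Fin k → (Fin (ar R + 2) → I.Dom), Function.Injective f ∧
          ∀ j, f j ∈ applyString (ar R) π (I.rInt R) ∧ f j 0 = u ∧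
            ∀ i : Fin (ar R + 1), f j i.succ ∈ qpsem I (cs i) }

/-- ALCQI concepts (with qualified number restrictions and inverse roles). -/
inductive ALCQI (Cn Rn : Type) : Type
  | top : ALCQI Cn Rn
  | bot : ALCQI Cn Rn
  | atom (A : Cn) : ALCQI Cn Rn
  | neg (C : ALCQI Cn Rn) : ALCQI Cn Rn
  | inter (C D : ALCQI Cn Rn) : ALCQI Cn Rn
  | atLeast (k : ℕ) (R : Rn) (inv : Bool) (C : ALCQI Cn Rn) : ALCQI Cn Rn

/-- Binary interpretations for ALCQI. -/
structure Interp (Cn Rn : Type) : Type 1 where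
  Dom : Type
  cInt : Cn → Set Dom
  rInt : Rn → Set (Dom × Dom)

/-- Semantics of ALCQI. -/
def qsem {Cn Rn : Type} (I : Interp Cn Rn) : ALCQI Cn Rn → Set I.Dom
  | .top => Set.univ
  | .bot => ∅
  | .atom A => I.cInt A
  | .neg C => (qsem I C)ᶜ
  | .inter C D => qsem I C ∩ qsem I D
  | .atLeast k R b C =>
      { u | ∃ f : Fin k → I.Dom, Function.Injective f ∧
          ∀ i, (if b then ((f i, u) ∈ I.rInt R) else ((u, f i) ∈ I.rInt R)) ∧
            f i ∈ qsem I C }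

/-- Target concept names of the translation: old concept names, the fresh `C_dom`,
and a fresh `L_R` for each role name `R`. -/
abbrev TCn (Cn Rn : Type) : Type := Cn ⊕ (Unit ⊕ Rn)

/-- The fresh concept `C_dom`. -/
def cdom {Cn Rn : Type} : ALCQI (TCn Cn Rn) ℕ := .atom (.inr (.inl ()))

/-- The fresh concept `L_R`. -/
def lR {Cn Rn : Type} (R : Rn) : ALCQI (TCn Cn Rn) ℕ := .atom (.inr (.inr R))

/-- Finite conjunction. -/
def bigAnd {Cn Rn : Type} : List (ALCQI Cn Rn) → ALCQI Cn Rn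
  | [] => .top
  | c :: cs => .inter c (bigAnd cs)

/-- `∃F.C` as `≥1 F.C`. -/
def exI {Cn Rn : Type} (F : Rn) (C : ALCQI Cn Rn) : ALCQI Cn Rn := .atLeast 1 F false C

/-- `∀F.C` as `¬ ≥1 F.(¬C)`. -/
def allI {Cn Rn : Type} (F : Rn) (C : ALCQI Cn Rn) : ALCQI Cn Rn :=
  .neg (.atLeast 1 F false (.neg C))

/-- `=1 F.⊤`: the out-degree of `F` is exactly one. -/
def eqOneTop {Cn Rn : Type} (F : Rn) : ALCQI Cn Rn :=
  .inter (.atLeast 1 F false .top) (.neg (.atLeast 2 F false .top))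

/-- `χ_R`: `L_R` holds and every other `L_S` fails. -/
noncomputable def chi {Cn Rn : Type} [Fintype Rn] [DecidableEq Rn] (R : Rn) : ALCQI (TCn Cn Rn) ℕ :=
  .inter (lR R) (bigAnd (((Finset.univ.erase R).toList).map fun S => .neg (lR S)))

/-- `Outdeg_n`: each `F_i` (for `i < n`) has out-degree exactly one with range in `C_dom`. -/
def outdeg {Cn Rn : Type} (n : ℕ) : ALCQI (TCn Cn Rn) ℕ :=
  bigAnd ((List.range n).map fun i => .inter (eqOneTop i) (allI i cdom))

/-- The reification translation `𝕋` from ALCQP(p,s) into ALCQI: homomorphic on Booleans,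
and `𝕋(≥k R^π.(C₂,…,Cₙ)) = ≥k F_{π₁}⁻¹.(¬C_dom ⊓ χ_R ⊓ Outdeg_n ⊓ ∃F_{π₂}.𝕋(C₂) ⊓ … ⊓
∃F_{πₙ}.𝕋(Cₙ))`, where `πᵢ` is the source coordinate of `R` sent to position `i` by `π`. -/
noncomputable def reify {Cn Rn : Type} [Fintype Rn] [DecidableEq Rn] {ar : Rn → ℕ} :
    ALCQP Cn Rn ar → ALCQI (TCn Cn Rn) ℕ
  | .top => .top
  | .bot => .bot
  | .atom A => .atom (.inl A)
  | .neg C => .neg (reify C)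
  | .inter C D => .inter (reify C) (reify D)
  | .atLeast k R π cs =>
      .atLeast k ((permOfString (ar R) π 0 : Fin (ar R + 2)).val) true
        (bigAnd ((.neg cdom) :: chi R :: outdeg (ar R + 2) ::
          List.ofFn fun i : Fin (ar R + 1) =>
            exI ((permOfString (ar R) π i.succ : Fin (ar R + 2)).val) (reify (cs i))))

/-- Concept satisfiability for ALCQP(p,s). -/
def satQP {Cn Rn : Type} {ar : Rn → ℕ} (C : ALCQP Cn Rn ar) : Prop :=
  ∃ (I : PInterp Cn Rn ar) (u : I.Dom), u ∈ qpsem I C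

/-- Concept satisfiability for ALCQI. -/
def satQI {Cn Rn : Type} (C : ALCQI Cn Rn) : Prop :=
  ∃ (I : Interp Cn Rn) (u : I.Dom), u ∈ qsem I C

/-! Reify every tuple of every role as a fresh element, labelled `L_R` by its role, with `F_i`
pointing to its `i`-th component, and mark the old elements with `C_dom`. By induction on `C`,
an old element satisfies `𝕋(C)` exactly when it satisfies `C`: the `F_{π₁}⁻¹`-predecessors of `x`
satisfying the translated body are precisely the reified tuples of `R` that become witnesses for
`≥k R^π.(C₂,…,Cₙ)` at `x` after permuting by `π`, and both correspondences are injective, so the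
counts agree. -/

theorem exists_injective_mem_image_iff {α γ : Type*} {g : γ → α} (hg : Function.Injective g)
    (S : Set γ) (k : ℕ) :
    (∃ f : Fin k → α, Function.Injective f ∧ ∀ j, f j ∈ g '' S) ↔
      ∃ f : Fin k → γ, Function.Injective f ∧ ∀ j, f j ∈ S := by
  constructor
  · rintro ⟨f, hf, hS⟩
    choose f' hf'S hf' using hS
    refine ⟨f', fun a b hab => hf ?_, hf'S⟩
    rw [← hf' a, ← hf' b, hab]
  · rintro ⟨f, hf, hS⟩
    exact ⟨g ∘ f, hg.comp hf, fun j => Set.mem_image_of_mem g (hS j)⟩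

theorem applyString_eq_image {A : Type*} (n : ℕ) (π : List PS) (R : Set (Fin (n + 2) → A)) :
    applyString n π R = (· ∘ ⇑(permOfString n π)) '' R := by
  induction π generalizing R with
  | nil => simp [applyString, permOfString]
  | cons o rest ih =>
    simp only [applyString, applyOp, ih, Set.image_image, permOfString]
    rfl

theorem setOf_mem_applyString_and_eq_image {A : Type*} (n : ℕ) (π : List PS)
    (R : Set (Fin (n + 2) → A)) (Q : (Fin (n + 2) → A) → Prop) :
    {t | t ∈ applyString n π R ∧ Q t} =
      (fun s : R => s.1 ∘ permOfString n π) '' {s | Q (s.1 ∘ permOfString n π)} := by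
  ext t
  simp only [applyString_eq_image, Set.mem_ofPred_eq, Set.mem_image, Subtype.exists,
    exists_and_right, exists_prop]
  constructor
  · rintro ⟨⟨s, hs, rfl⟩, hQ⟩
    exact ⟨s, ⟨hs, hQ⟩, rfl⟩
  · rintro ⟨s, ⟨hs, hQ⟩, rfl⟩
    exact ⟨⟨s, hs, rfl⟩, hQ⟩

section ALCQISemantics

variable {Cn Rn : Type} (J : Interp Cn Rn)

theorem mem_qsem_bigAnd (l : List (ALCQI Cn Rn)) (x : J.Dom) :
    x ∈ qsem J (bigAnd l) ↔ ∀ c ∈ l, x ∈ qsem J c := by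
  induction l with
  | nil => simp [bigAnd, qsem]
  | cons c cs ih => simp [bigAnd, qsem, ih]

theorem mem_qsem_exI (F : Rn) (C : ALCQI Cn Rn) (x : J.Dom) :
    x ∈ qsem J (exI F C) ↔ ∃ y, (x, y) ∈ J.rInt F ∧ y ∈ qsem J C := by
  constructor
  · rintro ⟨f, -, hf⟩
    exact ⟨f 0, by simpa using (hf 0).1, (hf 0).2⟩
  · rintro ⟨y, hxy, hy⟩
    exact ⟨fun _ => y, fun a b _ => Subsingleton.elim a b, fun _ => ⟨by simpa using hxy, hy⟩⟩

theorem mem_qsem_allI (F : Rn) (C : ALCQI Cn Rn) (x : J.Dom) :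
    x ∈ qsem J (allI F C) ↔ ∀ y, (x, y) ∈ J.rInt F → y ∈ qsem J C := by
  have h := mem_qsem_exI J F (.neg C) x
  simp only [exI, qsem, Set.mem_compl_iff] at h
  simp only [allI, qsem, Set.mem_compl_iff, h]
  push Not
  rfl

theorem mem_qsem_eqOneTop (F : Rn) (x : J.Dom) :
    x ∈ qsem J (eqOneTop F) ↔ ∃! y, (x, y) ∈ J.rInt F := by
  change x ∈ qsem J (exI F .top) ∧ x ∉ qsem J (.atLeast 2 F false .top) ↔ _
  simp only [mem_qsem_exI, qsem, Set.mem_univ, and_true, Bool.false_eq_true, if_false,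
    Set.mem_ofPred_eq, not_exists, not_and]
  constructor
  · rintro ⟨⟨y, hy⟩, htwo⟩
    refine ⟨y, hy, fun z hz => by_contra fun hzy => htwo ![z, y] ?_ ?_⟩
    · intro a b hab
      fin_cases a <;> fin_cases b <;> simp_all [eq_comm]
    · intro j
      fin_cases j <;> simp [hy, hz]
  · rintro ⟨y, hy, huniq⟩
    refine ⟨⟨y, hy⟩, fun f hf hfx => ?_⟩
    have h01 : f 0 = f 1 := by rw [huniq _ (hfx 0), huniq _ (hfx 1)]
    exact absurd (hf h01) (by decide)

theorem mem_qsem_atLeast_inv (k : ℕ) (F : Rn) (C : ALCQI Cn Rn) (x : J.Dom) :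
    x ∈ qsem J (.atLeast k F true C) ↔
      ∃ f : Fin k → J.Dom, Function.Injective f ∧
        ∀ j, f j ∈ {y | (y, x) ∈ J.rInt F} ∩ qsem J C := by
  simp [qsem]

end ALCQISemantics

section Reification

variable {Cn Rn : Type} {ar : Rn → ℕ}

/-- Reducible, so that `Sum.inl x` and `Sum.inr t` can be used directly as its elements. -/
abbrev reifiedInterp (I : PInterp Cn Rn ar) : Interp (TCn Cn Rn) ℕ where
  Dom := I.Dom ⊕ Σ R, I.rInt R
  cInt
    | .inl A => Sum.inl '' I.cInt A
    | .inr (.inl ()) => Set.range Sum.inl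
    | .inr (.inr S) => Sum.inr '' {t | t.1 = S}
  rInt F := {q | ∃ (t : Σ R, I.rInt R) (i : Fin (ar t.1 + 2)),
    i.val = F ∧ q = (Sum.inr t, Sum.inl (t.2.1 i))}

variable (I : PInterp Cn Rn ar)

theorem inl_mem_reifiedInterp_cInt_inl (A : Cn) (x : I.Dom) :
    (Sum.inl x : (reifiedInterp I).Dom) ∈ (reifiedInterp I).cInt (.inl A) ↔ x ∈ I.cInt A :=
  Sum.inl_injective.mem_set_image

theorem qsem_reifiedInterp_cdom :
    qsem (reifiedInterp I) cdom = Set.range Sum.inl :=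
  rfl

theorem inl_not_mem_reifiedInterp_rInt (F : ℕ) (x : I.Dom) (y : (reifiedInterp I).Dom) :
    (Sum.inl x, y) ∉ (reifiedInterp I).rInt F := by
  rintro ⟨t, i, -, h⟩
  exact Sum.inl_ne_inr (congrArg Prod.fst h)

theorem inr_mem_reifiedInterp_rInt (t : Σ R, I.rInt R) (i : Fin (ar t.1 + 2))
    (y : (reifiedInterp I).Dom) :
    (Sum.inr t, y) ∈ (reifiedInterp I).rInt i.val ↔ y = Sum.inl (t.2.1 i) := by
  constructor
  · rintro ⟨t', i', hi', h⟩
    obtain ⟨ht, rfl⟩ := Prod.mk.inj h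
    cases Sum.inr_injective ht
    rw [Fin.val_injective hi']
  · rintro rfl
    exact ⟨t, i, rfl, rfl⟩

theorem inr_mem_qsem_outdeg (t : Σ R, I.rInt R) :
    Sum.inr t ∈ qsem (reifiedInterp I) (outdeg (Cn := Cn) (Rn := Rn) (ar t.1 + 2)) := by
  simp only [outdeg, mem_qsem_bigAnd (reifiedInterp I), List.forall_mem_map, List.mem_range]
  intro i hi
  have hrel := inr_mem_reifiedInterp_rInt I t ⟨i, hi⟩
  refine ⟨(mem_qsem_eqOneTop _ i _).mpr ⟨_, (hrel _).mpr rfl, fun y hy => (hrel y).mp hy⟩,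
    (mem_qsem_allI _ i _ _).mpr fun y hy => ?_⟩
  rw [(hrel y).mp hy, qsem_reifiedInterp_cdom]
  exact Set.mem_range_self _

variable [Fintype Rn] [DecidableEq Rn]

theorem inr_mem_qsem_chi (R : Rn) (t : Σ R, I.rInt R) :
    Sum.inr t ∈ qsem (reifiedInterp I) (chi (Cn := Cn) R) ↔ t.1 = R := by
  have hL (S : Rn) : Sum.inr t ∈ qsem (reifiedInterp I) (lR (Cn := Cn) S) ↔ t.1 = S :=
    Sum.inr_injective.mem_set_image
  simp only [chi, qsem, Set.mem_inter_iff, mem_qsem_bigAnd (reifiedInterp I),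
    List.forall_mem_map, Finset.mem_toList, Finset.mem_erase, Set.mem_compl_iff, hL]
  exact ⟨And.left, fun h => ⟨h, fun S hS => h ▸ Ne.symm hS.1⟩⟩

/-- The body of `𝕋(≥k R^π.(C₂,…,Cₙ))`, with `σ = permOfString π` and `ds i = 𝕋(Cᵢ₊₂)`. -/
noncomputable def tupleConcept (R : Rn) (σ : Equiv.Perm (Fin (ar R + 2)))
    (ds : Fin (ar R + 1) → ALCQI (TCn Cn Rn) ℕ) : ALCQI (TCn Cn Rn) ℕ :=
  bigAnd ((.neg cdom) :: chi R :: outdeg (ar R + 2) ::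
    List.ofFn fun i => exI (σ i.succ).val (ds i))

theorem reify_atLeast (k : ℕ) (R : Rn) (π : List PS) (cs : Fin (ar R + 1) → ALCQP Cn Rn ar) :
    reify (.atLeast k R π cs) =
      .atLeast k (permOfString (ar R) π 0).val true
        (tupleConcept R (permOfString (ar R) π) fun i => reify (cs i)) :=
  rfl

theorem fst_eq_of_inr_mem_qsem_tupleConcept {R : Rn} {σ : Equiv.Perm (Fin (ar R + 2))}
    {ds : Fin (ar R + 1) → ALCQI (TCn Cn Rn) ℕ} {t : Σ R, I.rInt R}
    (h : Sum.inr t ∈ qsem (reifiedInterp I) (tupleConcept R σ ds)) : t.1 = R :=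
  (inr_mem_qsem_chi I R t).mp <|
    (mem_qsem_bigAnd _ _ _).mp h _ (List.mem_cons_of_mem _ List.mem_cons_self)

theorem inr_mk_mem_qsem_tupleConcept {R : Rn} (σ : Equiv.Perm (Fin (ar R + 2)))
    (ds : Fin (ar R + 1) → ALCQI (TCn Cn Rn) ℕ) (s : I.rInt R) :
    Sum.inr ⟨R, s⟩ ∈ qsem (reifiedInterp I) (tupleConcept R σ ds) ↔
      ∀ i, Sum.inl (s.1 (σ i.succ)) ∈ qsem (reifiedInterp I) (ds i) := by
  have hex (i : Fin (ar R + 1)) :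
      Sum.inr ⟨R, s⟩ ∈ qsem (reifiedInterp I) (exI (σ i.succ).val (ds i)) ↔
        Sum.inl (s.1 (σ i.succ)) ∈ qsem (reifiedInterp I) (ds i) := by
    rw [mem_qsem_exI (reifiedInterp I)]
    simp only [inr_mem_reifiedInterp_rInt I ⟨R, s⟩ (σ i.succ), exists_eq_left]
  have hnotdom : Sum.inr ⟨R, s⟩ ∉ qsem (reifiedInterp I) (cdom (Cn := Cn) (Rn := Rn)) := by
    rintro ⟨x, hx⟩
    exact Sum.inl_ne_inr hx
  simp only [tupleConcept, mem_qsem_bigAnd (reifiedInterp I), List.forall_mem_cons,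
    List.forall_mem_ofFn_iff, hex]
  exact ⟨fun h => h.2.2.2, fun h => ⟨hnotdom, (inr_mem_qsem_chi I R _).mpr rfl,
    inr_mem_qsem_outdeg I ⟨R, s⟩, h⟩⟩

theorem inv_witnesses_tupleConcept_eq_image (R : Rn) (σ : Equiv.Perm (Fin (ar R + 2)))
    (ds : Fin (ar R + 1) → ALCQI (TCn Cn Rn) ℕ) (x : I.Dom) :
    {y | (y, Sum.inl x) ∈ (reifiedInterp I).rInt (σ 0).val} ∩
        qsem (reifiedInterp I) (tupleConcept R σ ds) =
      (fun s : I.rInt R => (Sum.inr ⟨R, s⟩ : (reifiedInterp I).Dom)) ''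
        {s | s.1 (σ 0) = x ∧ ∀ i, Sum.inl (s.1 (σ i.succ)) ∈ qsem (reifiedInterp I) (ds i)} := by
  ext y
  constructor
  · rintro ⟨hrel, hy⟩
    obtain x' | ⟨S, s⟩ := y
    · exact absurd hrel (inl_not_mem_reifiedInterp_rInt I _ x' _)
    obtain rfl : S = R := fst_eq_of_inr_mem_qsem_tupleConcept I hy
    refine ⟨s, ⟨?_, (inr_mk_mem_qsem_tupleConcept I σ ds s).mp hy⟩, rfl⟩
    exact (Sum.inl_injective ((inr_mem_reifiedInterp_rInt I ⟨S, s⟩ (σ 0) _).mp hrel)).symm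
  · rintro ⟨s, ⟨rfl, hs⟩, rfl⟩
    exact ⟨(inr_mem_reifiedInterp_rInt I ⟨R, s⟩ (σ 0) _).mpr rfl,
      (inr_mk_mem_qsem_tupleConcept I σ ds s).mpr hs⟩

theorem inl_mem_qsem_reify (C : ALCQP Cn Rn ar) (x : I.Dom) :
    Sum.inl x ∈ qsem (reifiedInterp I) (reify C) ↔ x ∈ qpsem I C := by
  induction C generalizing x with
  | top | bot => simp [reify, qsem, qpsem]
  | atom A => exact inl_mem_reifiedInterp_cInt_inl I A x
  | neg C ih => exact (ih x).not
  | inter C D ihC ihD => exact and_congr (ihC x) (ihD x)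
  | atLeast k R π cs ih =>
    have hinj_node : Function.Injective
        fun s : I.rInt R => (Sum.inr ⟨R, s⟩ : (reifiedInterp I).Dom) :=
      Sum.inr_injective.comp sigma_mk_injective
    have hinj_tuple : Function.Injective fun s : I.rInt R => s.1 ∘ permOfString (ar R) π :=
      fun s s' h => Subtype.ext ((permOfString (ar R) π).surjective.injective_comp_right h)
    rw [reify_atLeast, mem_qsem_atLeast_inv (reifiedInterp I),
      inv_witnesses_tupleConcept_eq_image, exists_injective_mem_image_iff hinj_node]
    simp only [ih]
    change _ ↔ ∃ f, Function.Injective f ∧ ∀ j, f j ∈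
      {t | t ∈ applyString (ar R) π (I.rInt R) ∧ t 0 = x ∧ ∀ i, t i.succ ∈ qpsem I (cs i)}
    rw [setOf_mem_applyString_and_eq_image, exists_injective_mem_image_iff hinj_tuple]
    rfl

end Reification

/-- If an ALCQP(p,s) concept `C` is satisfiable, then the ALCQI concept
`C_dom ⊓ 𝕋(C)` is satisfiable. -/
theorem satQP_implies_satQI {Cn Rn : Type} [Fintype Rn] [DecidableEq Rn] {ar : Rn → ℕ}
    (C : ALCQP Cn Rn ar) (h : satQP C) :
    satQI (.inter cdom (reify C)) := by
  obtain ⟨I, u, hu⟩ := h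
  exact ⟨reifiedInterp I, Sum.inl u, ⟨u, rfl⟩, (inl_mem_qsem_reify I C u).mpr hu⟩
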